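/- arXiv:1508.00867 — 3 statements merged into one kernel-verified Lean document; each statement's English description precedes it below -/
import Mathlib

section
/- Let R ⊆ G be the union of all closed intercommunicating classes of the G-stochastic function P_(·). Then every probability measure μ compatible with the imitation kernel p satisfies μ({x ∈ G^ℤ : x_n ∈ R for all n ∈ ℤ}) = 1. -/
open MeasureTheory
open scoped BigOperators

/-- The matrix of a word `𝐚 = (a_1, …, a_n)` (encoded as a list `[a_1, …, a_n]`),
namely `P_𝐚 = P_(a_n) ⋯ P_(a_1)`, so that `wordK P l i j` is the `(i,j)` entry. -/
noncomputable def wordK {G : Type*} [Fintype G] [DecidableEq G]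
    (P : ℕ → G → G → ℝ) : List ℕ → G → G → ℝ
  | [] => fun i j => if i = j then 1 else 0
  | a :: l => fun i j => ∑ m, wordK P l i m * P a m j

/-- A word over the alphabet `A`: a nonempty finite tuple with entries in `A`. -/
def IsWord (A : Set ℕ) (l : List ℕ) : Prop := l ≠ [] ∧ ∀ a ∈ l, a ∈ A

/-- `i` communicates with `j` if `P_𝐚(i,j) > 0` for some word `𝐚`. -/
def Communicates {G : Type*} [Fintype G] [DecidableEq G]
    (A : Set ℕ) (P : ℕ → G → G → ℝ) (i j : G) : Prop :=
  ∃ l : List ℕ, IsWord A l ∧ 0 < wordK P l i j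

/-- `i` and `j` intercommunicate (every state intercommunicates with itself). -/
def Intercommunicates {G : Type*} [Fintype G] [DecidableEq G]
    (A : Set ℕ) (P : ℕ → G → G → ℝ) (i j : G) : Prop :=
  i = j ∨ (Communicates A P i j ∧ Communicates A P j i)

/-- An intercommunicating class: an equivalence class of the intercommunication relation. -/
def IsInterClass {G : Type*} [Fintype G] [DecidableEq G]
    (A : Set ℕ) (P : ℕ → G → G → ℝ) (C : Set G) : Prop :=
  ∃ i : G, C = {j | Intercommunicates A P i j}

/-- A set `C` is closed if whenever `i ∈ C` communicates with `j`, then `j ∈ C`. -/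
def IsClosedClass {G : Type*} [Fintype G] [DecidableEq G]
    (A : Set ℕ) (P : ℕ → G → G → ℝ) (C : Set G) : Prop :=
  ∀ i ∈ C, ∀ j : G, Communicates A P i j → j ∈ C

/-- `d` is the greatest common divisor of the set `S ⊆ ℕ`. -/
def IsGCDOfSet (S : Set ℕ) (d : ℕ) : Prop :=
  (∀ n ∈ S, d ∣ n) ∧ ∀ e : ℕ, (∀ n ∈ S, e ∣ n) → e ∣ d

/-- The set of depths `s(𝐚)` of words `𝐚` with `P_𝐚(i,i) > 0`. -/
def ReturnDepths {G : Type*} [Fintype G] [DecidableEq G]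
    (A : Set ℕ) (P : ℕ → G → G → ℝ) (i : G) : Set ℕ :=
  {s | ∃ l : List ℕ, IsWord A l ∧ 0 < wordK P l i i ∧ l.sum = s}

/-- `E` is measurable with respect to the coordinates `(x_m)_{m < n}`. -/
def PastMeasurable {G : Type*} [MeasurableSpace G] (n : ℤ) (E : Set (ℤ → G)) : Prop :=
  MeasurableSet[MeasurableSpace.comap
    (fun x : ℤ → G => fun m : {m : ℤ // m < n} => x m.1) MeasurableSpace.pi] E

/-- `μ` is compatible with the imitation kernel
`p(g | w_{-1}, w_{-2}, …) = ∑_{k ∈ A} θ_k P_(k)(w_{-k}, g)` (here `θ` vanishes off `A`). -/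
def Compatible {G : Type*} [MeasurableSpace G] (θ : ℕ → ℝ) (P : ℕ → G → G → ℝ)
    (μ : Measure (ℤ → G)) : Prop :=
  ∀ (n : ℤ) (g : G) (E : Set (ℤ → G)), PastMeasurable n E →
    (μ (E ∩ {x | x n = g})).toReal
      = ∫ x in E, (∑' k : ℕ, θ k * P k (x (n - (k : ℤ))) g) ∂μ


/-!
The averaged matrix `Q = ∑ₖ θₖ P₍ₖ₎` is stochastic, the union `R` of the closed classes is closed
under `Q`, and every state reaches `R`: following communications to a state `j` with the fewest
successors, all successors of `j` have the same successors, so their class is closed. Hence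
`Q^m 1_T → 0`, where `T = G \ R`.

For the one-time marginals `π_n` of `μ`, compatibility gives `π_n = ∑ₖ θₖ π_{n-k} P₍ₖ₎`.
Unrolling this `m` times, for all test functions `f ≥ 0` at once (one step replaces `f` by the
`P₍ₖ₎ f`), and using `π ≤ 1` at the end gives `⟨π_n, f⟩ ≤ ⟨1, Q^m f⟩`; taking `f = 1_T` shows
that `μ (x_n ∈ T) = 0` for every `n`.
-/

open MeasureTheory Matrix Filter Topology

section Communication

variable {G : Type*} [Fintype G] [DecidableEq G] {A : Set ℕ} {P : ℕ → G → G → ℝ}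

lemma wordK_append (l₁ l₂ : List ℕ) (i j : G) :
    wordK P (l₁ ++ l₂) i j = ∑ m, wordK P l₂ i m * wordK P l₁ m j := by
  induction l₁ generalizing j with
  | nil => simp [wordK]
  | cons a l₁ ih =>
    simp only [List.cons_append, wordK, ih, Finset.sum_mul, Finset.mul_sum, mul_assoc]
    exact Finset.sum_comm

lemma wordK_nonneg (hP : ∀ k ∈ A, ∀ i j, 0 ≤ P k i j) {l : List ℕ} (hl : ∀ a ∈ l, a ∈ A)
    (i j : G) : 0 ≤ wordK P l i j := by
  induction l generalizing j with
  | nil => simp only [wordK]; split_ifs <;> norm_num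
  | cons a l ih =>
    exact Finset.sum_nonneg fun m _ => mul_nonneg (ih (fun b hb => hl b (by simp [hb])) m)
      (hP a (hl a (by simp)) m j)

lemma Communicates.trans (hP : ∀ k ∈ A, ∀ i j, 0 ≤ P k i j) {i j z : G}
    (h₁ : Communicates A P i j) (h₂ : Communicates A P j z) : Communicates A P i z := by
  obtain ⟨l, ⟨-, hlA⟩, hl⟩ := h₁
  obtain ⟨l', ⟨hl'₀, hl'A⟩, hl'⟩ := h₂
  refine ⟨l' ++ l, ⟨by simp [hl'₀], fun a ha => ?_⟩, ?_⟩
  · rcases List.mem_append.mp ha with ha | ha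
    exacts [hl'A a ha, hlA a ha]
  · rw [wordK_append]
    exact Finset.sum_pos' (fun m _ => mul_nonneg (wordK_nonneg hP hlA i m)
      (wordK_nonneg hP hl'A m z)) ⟨j, Finset.mem_univ j, mul_pos hl hl'⟩

lemma communicates_of_pos {k : ℕ} (hk : k ∈ A) {i j : G} (h : 0 < P k i j) :
    Communicates A P i j :=
  ⟨[k], ⟨List.cons_ne_nil _ _, by simpa using hk⟩, by simpa [wordK] using h⟩

lemma exists_communicates (hA : A.Nonempty) (hrow : ∀ k ∈ A, ∀ i, ∑ j, P k i j = 1) (i : G) :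
    ∃ j, Communicates A P i j := by
  obtain ⟨k, hk⟩ := hA
  obtain ⟨j, -, hj⟩ := Finset.exists_lt_of_sum_lt (f := 0) (g := P k i) (s := Finset.univ)
    (by simp [hrow k hk i])
  exact ⟨j, communicates_of_pos hk hj⟩

variable (A P) in
def closedClassUnion : Set G :=
  {j | ∃ C : Set G, IsInterClass A P C ∧ IsClosedClass A P C ∧ j ∈ C}

lemma mem_closedClassUnion_of_communicates {i j : G} (hi : i ∈ closedClassUnion A P)
    (h : Communicates A P i j) : j ∈ closedClassUnion A P := by
  obtain ⟨C, hC, hCclosed, hiC⟩ := hi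
  exact ⟨C, hC, hCclosed, hCclosed i hiC j h⟩

lemma exists_mem_closedClassUnion_communicates (hA : A.Nonempty)
    (hP : ∀ k ∈ A, ∀ i j, 0 ≤ P k i j) (hrow : ∀ k ∈ A, ∀ i, ∑ j, P k i j = 1) (i : G) :
    ∃ j ∈ closedClassUnion A P, Communicates A P i j := by
  classical
  let succ : G → Finset G := fun j => {z | Communicates A P j z}
  have hsucc : ∀ {j z}, z ∈ succ j ↔ Communicates A P j z := by simp [succ]
  obtain ⟨j, hij, hmin⟩ := (succ i).exists_min_image (fun j => (succ j).card)
    (by simpa [Finset.Nonempty, hsucc] using exists_communicates hA hrow i)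
  rw [hsucc] at hij
  have hsucc_eq : ∀ z, Communicates A P j z → succ z = succ j := fun z hz =>
    Finset.eq_of_subset_of_card_le (fun w hw => hsucc.2 (hz.trans hP (hsucc.1 hw)))
      (hmin z (hsucc.2 (hij.trans hP hz)))
  obtain ⟨j₀, hj₀⟩ := exists_communicates hA hrow j
  have hback : ∀ z, Communicates A P j₀ z → Communicates A P z j₀ := fun z hz =>
    hsucc.1 (hsucc_eq z (hj₀.trans hP hz) ▸ hsucc.2 hj₀)
  refine ⟨j₀, ⟨{z | Intercommunicates A P j₀ z}, ⟨j₀, rfl⟩, ?_, Or.inl rfl⟩, hij.trans hP hj₀⟩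
  intro z₁ hz₁ z₂ h₁₂
  have h₀₂ : Communicates A P j₀ z₂ := by
    rcases hz₁ with rfl | ⟨h₀₁, -⟩
    exacts [h₁₂, h₀₁.trans hP h₁₂]
  exact Or.inr ⟨h₀₂, hback z₂ h₀₂⟩

end Communication

namespace Matrix

variable {n : Type*} [Fintype n] {Q : Matrix n n ℝ} {R : Set n}

lemma mulVec_mono_of_nonneg (hQ : ∀ i j, 0 ≤ Q i j) {v w : n → ℝ} (h : v ≤ w) :
    Q *ᵥ v ≤ Q *ᵥ w :=
  fun i => dotProduct_le_dotProduct_of_nonneg_left h (hQ i)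

variable [DecidableEq n]

lemma pow_mulVec_le_of_mulVec_le (hQ : Q ∈ rowStochastic ℝ n) {v : n → ℝ} {c : ℝ} (hc : 0 ≤ c)
    (h : Q *ᵥ v ≤ c • v) (s : ℕ) : Q ^ s *ᵥ v ≤ c ^ s • v := by
  induction s with
  | zero => simp
  | succ s ih =>
    calc Q ^ (s + 1) *ᵥ v = Q ^ s *ᵥ (Q *ᵥ v) := by rw [pow_succ, mulVec_mulVec]
      _ ≤ Q ^ s *ᵥ (c • v) := mulVec_mono_of_nonneg (pow_mem hQ s).1 h
      _ = c • (Q ^ s *ᵥ v) := mulVec_smul _ _ _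
      _ ≤ c • (c ^ s • v) := smul_le_smul_of_nonneg_left ih hc
      _ = c ^ (s + 1) • v := by rw [smul_smul, pow_succ']

lemma mulVec_indicator_compl_le (hQ : Q ∈ rowStochastic ℝ n)
    (hR : ∀ i ∈ R, ∀ j, 0 < Q i j → j ∈ R) : Q *ᵥ Rᶜ.indicator 1 ≤ Rᶜ.indicator 1 := by
  intro i
  by_cases hi : i ∈ R
  · refine le_of_eq ?_
    rw [Set.indicator_of_notMem (by simpa using hi)]
    refine Finset.sum_eq_zero fun j _ => ?_
    by_cases hj : j ∈ R
    · simp [hj]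
    · simp [le_antisymm (not_lt.1 (mt (hR i hi j) hj)) (hQ.1 i j)]
  · calc (Q *ᵥ Rᶜ.indicator 1) i ≤ (Q *ᵥ 1) i :=
          mulVec_mono_of_nonneg hQ.1 (Set.indicator_le_self' fun _ _ => zero_le_one) i
      _ = Rᶜ.indicator 1 i := by simp [one_vecMul_of_mem_rowStochastic hQ, hi]

lemma antitone_pow_mulVec_indicator_compl (hQ : Q ∈ rowStochastic ℝ n)
    (hR : ∀ i ∈ R, ∀ j, 0 < Q i j → j ∈ R) :
    Antitone fun m : ℕ => Q ^ m *ᵥ Rᶜ.indicator 1 :=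
  antitone_nat_of_succ_le fun m => by
    rw [pow_succ, ← mulVec_mulVec]
    exact mulVec_mono_of_nonneg (pow_mem hQ m).1 (mulVec_indicator_compl_le hQ hR)

lemma pow_mulVec_indicator_compl_apply_lt_one (hQ : Q ∈ rowStochastic ℝ n) {m : ℕ} {i j : n}
    (hj : j ∈ R) (h : 0 < (Q ^ m) i j) : (Q ^ m *ᵥ Rᶜ.indicator 1) i < 1 := by
  rw [Set.indicator_compl, mulVec_sub, one_vecMul_of_mem_rowStochastic (pow_mem hQ m),
    Pi.sub_apply, Pi.one_apply, sub_lt_self_iff]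
  exact Finset.sum_pos' (fun k _ => mul_nonneg ((pow_mem hQ m).1 i k)
    (Set.indicator_nonneg (fun _ _ => zero_le_one) k)) ⟨j, Finset.mem_univ j, by simpa [hj]⟩

lemma exists_pow_mulVec_indicator_compl_le_smul (hQ : Q ∈ rowStochastic ℝ n)
    (hR : ∀ i ∈ R, ∀ j, 0 < Q i j → j ∈ R) (hreach : ∀ i, ∃ m, ∃ j ∈ R, 0 < (Q ^ m) i j) :
    ∃ M, 0 < M ∧ ∃ c : ℝ, 0 ≤ c ∧ c < 1 ∧
      Q ^ M *ᵥ Rᶜ.indicator 1 ≤ c • Rᶜ.indicator 1 := by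
  choose m j hjR hj using hreach
  set M := Finset.univ.sup m + 1
  set τ := Q ^ M *ᵥ Rᶜ.indicator 1
  have hτ_lt : ∀ i, τ i < 1 := fun i =>
    (antitone_pow_mulVec_indicator_compl hQ hR
      ((Finset.le_sup (Finset.mem_univ i)).trans (Nat.le_succ _)) i).trans_lt
      (pow_mulVec_indicator_compl_apply_lt_one hQ (hjR i) (hj i))
  have hτ_le : τ ≤ Rᶜ.indicator 1 := by
    simpa using antitone_pow_mulVec_indicator_compl hQ hR (Nat.zero_le M)
  let c := (insert 0 (Finset.univ.image τ)).max' (Finset.insert_nonempty _ _)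
  have hτ_c : ∀ i, τ i ≤ c := fun i => Finset.le_max' _ _ (by simp)
  refine ⟨M, Nat.succ_pos _, c, Finset.le_max' _ _ (by simp),
    (Finset.max'_lt_iff _ _).2 (by simpa using hτ_lt), fun i => ?_⟩
  by_cases hi : i ∈ R
  · simpa [hi] using hτ_le i
  · simpa [hi] using hτ_c i

theorem tendsto_pow_mulVec_indicator_compl (hQ : Q ∈ rowStochastic ℝ n)
    (hR : ∀ i ∈ R, ∀ j, 0 < Q i j → j ∈ R) (hreach : ∀ i, ∃ m, ∃ j ∈ R, 0 < (Q ^ m) i j) :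
    Tendsto (fun m => Q ^ m *ᵥ Rᶜ.indicator 1) atTop (𝓝 0) := by
  obtain ⟨M, hM, c, hc₀, hc₁, hQM⟩ := exists_pow_mulVec_indicator_compl_le_smul hQ hR hreach
  have hbound : ∀ m, Q ^ m *ᵥ Rᶜ.indicator 1 ≤ c ^ (m / M) • Rᶜ.indicator 1 := fun m =>
    calc Q ^ m *ᵥ Rᶜ.indicator 1 ≤ Q ^ (M * (m / M)) *ᵥ Rᶜ.indicator 1 :=
          antitone_pow_mulVec_indicator_compl hQ hR (Nat.mul_div_le m M)
      _ ≤ c ^ (m / M) • Rᶜ.indicator 1 := by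
          rw [pow_mul]
          exact pow_mulVec_le_of_mulVec_le (pow_mem hQ M) hc₀ hQM _
  have hlim : Tendsto (fun m => c ^ (m / M) • Rᶜ.indicator (1 : n → ℝ)) atTop (𝓝 0) := by
    simpa using ((tendsto_pow_atTop_nhds_zero_of_lt_one hc₀ hc₁).comp
      (Nat.tendsto_div_const_atTop hM.ne')).smul_const (Rᶜ.indicator (1 : n → ℝ))
  rw [tendsto_pi_nhds] at hlim ⊢
  exact fun i => tendsto_of_tendsto_of_tendsto_of_le_of_le tendsto_const_nhds (hlim i)
    (fun m => nonneg_mulVec_of_mem_rowStochastic (pow_mem hQ m)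
      (Set.indicator_nonneg fun _ _ => zero_le_one) i) (fun m => hbound m i)

end Matrix

section Imitation

variable {G : Type*} [Fintype G] [DecidableEq G] {A : Set ℕ} {θ : ℕ → ℝ} {P : ℕ → G → G → ℝ}

structure IsImitationKernel (A : Set ℕ) (θ : ℕ → ℝ) (P : ℕ → G → G → ℝ) : Prop where
  theta_pos : ∀ k ∈ A, 0 < θ k
  theta_eq_zero : ∀ k, k ∉ A → θ k = 0
  hasSum_theta : HasSum θ 1
  mem_rowStochastic : ∀ k ∈ A, of (P k) ∈ rowStochastic ℝ G

noncomputable def averagedMatrix (θ : ℕ → ℝ) (P : ℕ → G → G → ℝ) : Matrix G G ℝ :=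
  of fun i j => ∑' k, θ k * P k i j

namespace IsImitationKernel

variable (h : IsImitationKernel A θ P)
include h

lemma nonneg {k : ℕ} (hk : k ∈ A) (i j : G) : 0 ≤ P k i j :=
  nonneg_of_mem_rowStochastic (h.mem_rowStochastic k hk) (i := i) (j := j)

lemma sum_row {k : ℕ} (hk : k ∈ A) (i : G) : ∑ j, P k i j = 1 :=
  sum_row_of_mem_rowStochastic (h.mem_rowStochastic k hk) i

lemma theta_nonneg (k : ℕ) : 0 ≤ θ k := by
  by_cases hk : k ∈ A
  exacts [(h.theta_pos k hk).le, (h.theta_eq_zero k hk).ge]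

lemma theta_mul_nonneg (k : ℕ) (i j : G) : 0 ≤ θ k * P k i j := by
  by_cases hk : k ∈ A
  · exact mul_nonneg (h.theta_nonneg k) (h.nonneg hk i j)
  · simp [h.theta_eq_zero k hk]

lemma norm_theta_mul_le (k : ℕ) (i j : G) : ‖θ k * P k i j‖ ≤ θ k := by
  rw [Real.norm_of_nonneg (h.theta_mul_nonneg k i j)]
  by_cases hk : k ∈ A
  · exact mul_le_of_le_one_right (h.theta_nonneg k)
      (le_one_of_mem_rowStochastic (h.mem_rowStochastic k hk) (i := i) (j := j))
  · simp [h.theta_eq_zero k hk]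

lemma hasSum_averagedMatrix (i j : G) :
    HasSum (fun k => θ k * P k i j) (averagedMatrix θ P i j) :=
  (h.hasSum_theta.summable.of_norm_bounded (h.norm_theta_mul_le · i j)).hasSum

lemma averagedMatrix_mem_rowStochastic : averagedMatrix θ P ∈ rowStochastic ℝ G := by
  refine mem_rowStochastic_iff_sum.2 ⟨fun i j => tsum_nonneg (h.theta_mul_nonneg · i j),
    fun i => ?_⟩
  refine (hasSum_sum fun j _ => h.hasSum_averagedMatrix i j).unique ?_
  convert h.hasSum_theta using 1
  ext k
  by_cases hk : k ∈ A
  · rw [← Finset.mul_sum, h.sum_row hk i, mul_one]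
  · simp [h.theta_eq_zero k hk]

lemma hasSum_dotProduct_mulVec (w f : G → ℝ) :
    HasSum (fun k => θ k * (w ⬝ᵥ (of (P k) *ᵥ f))) (w ⬝ᵥ (averagedMatrix θ P *ᵥ f)) := by
  simp only [dotProduct, mulVec, of_apply, Finset.mul_sum]
  refine hasSum_sum fun i _ => hasSum_sum fun j _ => ?_
  simpa only [mul_left_comm, mul_assoc] using
    ((h.hasSum_averagedMatrix i j).mul_left (w i)).mul_right (f j)

lemma exists_pos_of_averagedMatrix_pos {i j : G} (hQ : 0 < averagedMatrix θ P i j) :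
    ∃ k ∈ A, 0 < P k i j := by
  by_contra! hP
  have hzero : ∀ k, θ k * P k i j = 0 := fun k => by
    by_cases hk : k ∈ A
    · rw [le_antisymm (hP k hk) (h.nonneg hk i j), mul_zero]
    · rw [h.theta_eq_zero k hk, zero_mul]
  simp [averagedMatrix, hzero] at hQ

lemma averagedMatrix_pos {k : ℕ} (hk : k ∈ A) {i j : G} (hP : 0 < P k i j) :
    0 < averagedMatrix θ P i j :=
  (mul_pos (h.theta_pos k hk) hP).trans_le
    (le_hasSum (h.hasSum_averagedMatrix i j) k fun b _ => h.theta_mul_nonneg b i j)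

lemma averagedMatrix_pow_length_pos {l : List ℕ} (hl : ∀ a ∈ l, a ∈ A) {i j : G}
    (hw : 0 < wordK P l i j) : 0 < (averagedMatrix θ P ^ l.length) i j := by
  induction l generalizing j with
  | nil =>
    simp only [wordK] at hw
    split_ifs at hw with hij
    · simp [hij]
    · exact absurd hw (lt_irrefl 0)
  | cons a l ih =>
    have hlA : ∀ b ∈ l, b ∈ A := fun b hb => hl b (by simp [hb])
    have haA : a ∈ A := hl a (by simp)
    obtain ⟨m, -, hm⟩ := (Finset.sum_pos_iff_of_nonneg fun m _ =>
      mul_nonneg (wordK_nonneg (fun k hk => h.nonneg hk) hlA i m) (h.nonneg haA m j)).1 hw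
    rw [List.length_cons, pow_succ, mul_apply]
    exact Finset.sum_pos' (fun m _ => mul_nonneg
        ((pow_mem h.averagedMatrix_mem_rowStochastic _).1 i m)
        (h.averagedMatrix_mem_rowStochastic.1 m j))
      ⟨m, Finset.mem_univ m, mul_pos (ih hlA (pos_of_mul_pos_left hm (h.nonneg haA m j)))
        (h.averagedMatrix_pos haA (pos_of_mul_pos_right hm
          (wordK_nonneg (fun k hk => h.nonneg hk) hlA i m)))⟩

lemma tendsto_averagedMatrix_pow_mulVec (hA : A.Nonempty) :
    Tendsto (fun m => averagedMatrix θ P ^ m *ᵥ (closedClassUnion A P)ᶜ.indicator 1) atTop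
      (𝓝 0) := by
  refine tendsto_pow_mulVec_indicator_compl h.averagedMatrix_mem_rowStochastic
    (fun i hi j hij => ?_) (fun i => ?_)
  · obtain ⟨k, hk, hP⟩ := h.exists_pos_of_averagedMatrix_pos hij
    exact mem_closedClassUnion_of_communicates hi (communicates_of_pos hk hP)
  · obtain ⟨j, hj, l, ⟨-, hl⟩, hw⟩ := exists_mem_closedClassUnion_communicates hA
      (fun k hk => h.nonneg hk) (fun k hk => h.sum_row hk) i
    exact ⟨l.length, j, hj, h.averagedMatrix_pow_length_pos hl hw⟩

end IsImitationKernel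

end Imitation

section Marginal

variable {G : Type*} [Fintype G] [MeasurableSpace G] [MeasurableSingletonClass G]
  {μ : Measure (ℤ → G)}

noncomputable def marginal (μ : Measure (ℤ → G)) (n : ℤ) : G → ℝ :=
  fun g => μ.real {x | x n = g}

lemma integrable_comp_eval [IsFiniteMeasure μ] (φ : G → ℝ) (n : ℤ) :
    Integrable (fun x => φ (x n)) μ :=
  Integrable.of_finite.comp_measurable (measurable_pi_apply n)

lemma integral_comp_eval_eq_dotProduct [IsFiniteMeasure μ] (φ : G → ℝ) (n : ℤ) :
    ∫ x, φ (x n) ∂μ = marginal μ n ⬝ᵥ φ := by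
  rw [← integral_map (measurable_pi_apply n).aemeasurable
    (measurable_of_countable φ).aestronglyMeasurable, integral_fintype Integrable.of_finite]
  refine Finset.sum_congr rfl fun g _ => ?_
  rw [smul_eq_mul, measureReal_def, Measure.map_apply (measurable_pi_apply n)
    (measurableSet_singleton g)]
  rfl

variable [DecidableEq G] {A : Set ℕ} {θ : ℕ → ℝ} {P : ℕ → G → G → ℝ}

namespace IsImitationKernel

variable (h : IsImitationKernel A θ P)
include h

lemma hasSum_marginal [IsProbabilityMeasure μ] (hcomp : Compatible θ P μ) (n : ℤ) (g : G) :
    HasSum (fun k : ℕ => θ k * (marginal μ (n - k) ᵥ* of (P k)) g) (marginal μ n g) := by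
  let F : ℕ → (ℤ → G) → ℝ := fun k x => θ k * P k (x (n - k)) g
  have hF_int : ∀ k, Integrable (F k) μ := fun k =>
    integrable_comp_eval (fun i => θ k * P k i g) _
  have hF_sum : Summable fun k => ∫ x, ‖F k x‖ ∂μ :=
    Summable.of_nonneg_of_le (fun k => integral_nonneg fun x => norm_nonneg _)
      (fun k => (integral_mono (hF_int k).norm (integrable_const _)
        fun x => h.norm_theta_mul_le k _ g).trans (by simp)) h.hasSum_theta.summable
  have hcomp_univ := hcomp n g Set.univ MeasurableSet.univ
  rw [Set.univ_inter, setIntegral_univ] at hcomp_univ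
  have hterm : (fun k : ℕ => θ k * (marginal μ (n - k) ᵥ* of (P k)) g)
      = fun k => ∫ x, F k x ∂μ := funext fun k => by
    rw [integral_const_mul]
    exact congrArg (θ k * ·) (integral_comp_eval_eq_dotProduct (fun i => P k i g) (n - k)).symm
  rw [hterm, marginal, measureReal_def, hcomp_univ]
  exact hasSum_integral_of_summable_integral_norm hF_int hF_sum

lemma hasSum_marginal_dotProduct [IsProbabilityMeasure μ] (hcomp : Compatible θ P μ) (n : ℤ)
    (f : G → ℝ) :
    HasSum (fun k : ℕ => θ k * (marginal μ (n - k) ⬝ᵥ (of (P k) *ᵥ f))) (marginal μ n ⬝ᵥ f) := by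
  have hterm : (fun k : ℕ => θ k * (marginal μ (n - k) ⬝ᵥ (of (P k) *ᵥ f)))
      = fun k => ∑ g, θ k * (marginal μ (n - k) ᵥ* of (P k)) g * f g := funext fun k => by
    rw [dotProduct_mulVec, dotProduct, Finset.mul_sum]
    simp only [mul_assoc]
  rw [hterm]
  exact hasSum_sum fun g _ => (h.hasSum_marginal hcomp n g).mul_right (f g)

lemma marginal_dotProduct_le [IsProbabilityMeasure μ] (hcomp : Compatible θ P μ) (m : ℕ) (n : ℤ)
    {f : G → ℝ} (hf : 0 ≤ f) : marginal μ n ⬝ᵥ f ≤ 1 ⬝ᵥ (averagedMatrix θ P ^ m *ᵥ f) := by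
  induction m generalizing n f with
  | zero =>
    rw [pow_zero, one_mulVec]
    exact dotProduct_le_dotProduct_of_nonneg_right (fun g => measureReal_le_one) hf
  | succ m ih =>
    rw [pow_succ, ← mulVec_mulVec, dotProduct_mulVec]
    refine hasSum_le (fun k => ?_) (h.hasSum_marginal_dotProduct hcomp n f)
      (h.hasSum_dotProduct_mulVec _ f)
    by_cases hk : k ∈ A
    · rw [← dotProduct_mulVec]
      exact mul_le_mul_of_nonneg_left
        (ih _ (nonneg_mulVec_of_mem_rowStochastic (h.mem_rowStochastic k hk) hf))
        (h.theta_nonneg k)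
    · simp [h.theta_eq_zero k hk]

lemma measure_eval_notMem_closedClassUnion [IsProbabilityMeasure μ] (hcomp : Compatible θ P μ)
    (hA : A.Nonempty) (n : ℤ) : μ {x | x n ∉ closedClassUnion A P} = 0 := by
  set T := (closedClassUnion A P)ᶜ
  have hT : MeasurableSet {x : ℤ → G | x n ∉ closedClassUnion A P} :=
    (Set.toFinite T).measurableSet.preimage (measurable_pi_apply n)
  have hbound : ∀ m, μ.real {x | x n ∉ closedClassUnion A P}
      ≤ 1 ⬝ᵥ (averagedMatrix θ P ^ m *ᵥ T.indicator 1) := fun m =>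
    calc μ.real {x | x n ∉ closedClassUnion A P} = ∫ x, T.indicator 1 (x n) ∂μ := by
          rw [← integral_indicator_one hT]
          rfl
      _ ≤ 1 ⬝ᵥ (averagedMatrix θ P ^ m *ᵥ T.indicator 1) := by
          rw [integral_comp_eval_eq_dotProduct]
          exact h.marginal_dotProduct_le hcomp m n (Set.indicator_nonneg fun _ _ => zero_le_one)
  have hlim : Tendsto (fun m => 1 ⬝ᵥ (averagedMatrix θ P ^ m *ᵥ T.indicator 1)) atTop
      (𝓝 (1 ⬝ᵥ 0)) :=
    ((continuous_const.dotProduct continuous_id).tendsto 0).comp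
      (h.tendsto_averagedMatrix_pow_mulVec hA)
  rw [dotProduct_zero] at hlim
  exact (measureReal_eq_zero_iff).1 (le_antisymm (ge_of_tendsto' hlim hbound) measureReal_nonneg)

end IsImitationKernel

end Marginal

theorem stmt_3_general {G : Type*} [Fintype G] [DecidableEq G]
    [MeasurableSpace G] [MeasurableSingletonClass G]
    (A : Set ℕ) (hA : A.Nonempty)
    (θ : ℕ → ℝ) (hθpos : ∀ k ∈ A, 0 < θ k) (hθ0 : ∀ k, k ∉ A → θ k = 0)
    (hθsum : HasSum θ 1)
    (P : ℕ → G → G → ℝ)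
    (hPnn : ∀ k ∈ A, ∀ i j : G, 0 ≤ P k i j)
    (hProw : ∀ k ∈ A, ∀ i : G, ∑ j, P k i j = 1)
    (μ : Measure (ℤ → G)) (hμ : IsProbabilityMeasure μ)
    (hcomp : Compatible θ P μ) :
    μ {x : ℤ → G | ∀ n : ℤ,
      x n ∈ {j : G | ∃ C : Set G, IsInterClass A P C ∧ IsClosedClass A P C ∧ j ∈ C}} = 1 := by
  have h : IsImitationKernel A θ P :=
    ⟨hθpos, hθ0, hθsum, fun k hk => mem_rowStochastic_iff_sum.2 ⟨hPnn k hk, hProw k hk⟩⟩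
  change μ {x | ∀ n, x n ∈ closedClassUnion A P} = 1
  rw [← ae_iff_prob_eq_one (by measurability), ae_all_iff]
  exact fun n => ae_iff.2 (h.measure_eval_notMem_closedClassUnion hcomp hA n)

/-- every compatible measure is supported by the trajectories
staying in the union `R` of all closed intercommunicating classes. -/
theorem stmt_3 {G : Type*} [Fintype G] [DecidableEq G] [Nonempty G]
    [MeasurableSpace G] [MeasurableSingletonClass G]
    (A : Set ℕ) (hA : A.Nonempty) (hApos : ∀ k ∈ A, 0 < k)
    (θ : ℕ → ℝ) (hθpos : ∀ k ∈ A, 0 < θ k) (hθ0 : ∀ k, k ∉ A → θ k = 0)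
    (hθsum : HasSum θ 1)
    (P : ℕ → G → G → ℝ)
    (hPnn : ∀ k ∈ A, ∀ i j : G, 0 ≤ P k i j)
    (hProw : ∀ k ∈ A, ∀ i : G, ∑ j, P k i j = 1)
    (μ : Measure (ℤ → G)) (hμ : IsProbabilityMeasure μ)
    (hcomp : Compatible θ P μ) :
    μ {x : ℤ → G | ∀ n : ℤ,
      x n ∈ {j : G | ∃ C : Set G, IsInterClass A P C ∧ IsClosedClass A P C ∧ j ∈ C}} = 1 :=
  stmt_3_general A hA θ hθpos hθ0 hθsum P hPnn hProw μ hμ hcomp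
end

section
/- For every imitation kernel p on a nonempty finite alphabet G, the set 𝒢(p) of compatible probability measures is nonempty. -/
open MeasureTheory
open scoped BigOperators

/-!
Start from a constant configuration and resample the sites `-N, …, N - 1` one after the other,
each from the kernel evaluated at the current configuration. The kernel at site `n` only reads
sites `< n`, which are never touched afterwards, so the resulting measure is already compatible at
every site `-N ≤ n < N`. The space `G^ℤ` is compact, hence so is the space of probability measures
on it, and along an ultrafilter these measures converge weakly. For a clopen past event `E` both
sides of the compatibility identity are integrals of continuous functions (the imitation kernel is
a uniformly convergent series of functions of single coordinates), so the identity passes to the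
limit; clopen past events form a π-system generating the past σ-algebra.
-/
open Filter Topology
open scoped ENNReal BoundedContinuousFunction

section Resample

variable {ι G : Type*} [DecidableEq ι] [Fintype G] [MeasurableSpace G]

noncomputable def resample (i : ι) (w : G → (ι → G) → ℝ≥0∞) (μ : Measure (ι → G)) :
    Measure (ι → G) :=
  ∑ g, (μ.withDensity (w g)).map (Function.update · i g)

variable {i : ι} {w : G → (ι → G) → ℝ≥0∞} {μ : Measure (ι → G)}

lemma lintegral_resample (hw : ∀ g, Measurable (w g)) {f : (ι → G) → ℝ≥0∞} (hf : Measurable f) :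
    ∫⁻ x, f x ∂resample i w μ = ∫⁻ x, ∑ g, w g x * f (Function.update x i g) ∂μ := by
  rw [resample, lintegral_finsetSum_measure,
    lintegral_finsetSum (f := fun g x => w g x * f (Function.update x i g)) _
      fun g _ => (hw g).mul (hf.comp measurable_update_left)]
  refine Finset.sum_congr rfl fun g _ => ?_
  rw [lintegral_map hf measurable_update_left]
  exact lintegral_withDensity_eq_lintegral_mul _ (hw g) (hf.comp measurable_update_left)

lemma resample_inter_eq_setLIntegral [MeasurableSingletonClass G] {E : Set (ι → G)}
    (hw : ∀ g, Measurable (w g)) (hE : MeasurableSet E)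
    (hEi : ∀ x g, Function.update x i g ∈ E ↔ x ∈ E) (g : G) :
    resample i w μ (E ∩ {x | x i = g}) = ∫⁻ x in E, w g x ∂μ := by
  classical
  have hS : MeasurableSet (E ∩ {x | x i = g}) :=
    hE.inter (measurable_pi_apply (X := fun _ => G) i (measurableSet_singleton g))
  rw [← lintegral_indicator_one hS, lintegral_resample hw (measurable_one.indicator hS),
    ← lintegral_indicator hE]
  congr 1 with x
  simp only [Set.indicator_apply, Set.mem_inter_iff, hEi, Set.mem_ofPred_eq,
    Function.update_self, Pi.one_apply]
  by_cases hx : x ∈ E <;> simp [hx]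

variable (hw : ∀ g, Measurable (w g)) (hw₁ : ∀ x, ∑ g, w g x = 1)
include hw hw₁

lemma lintegral_resample_of_update_eq {f : (ι → G) → ℝ≥0∞} (hf : Measurable f)
    (hfi : ∀ x g, f (Function.update x i g) = f x) :
    ∫⁻ x, f x ∂resample i w μ = ∫⁻ x, f x ∂μ := by
  simp_rw [lintegral_resample hw hf, hfi, ← Finset.sum_mul, hw₁, one_mul]

lemma resample_apply_of_update_mem_iff {S : Set (ι → G)} (hS : MeasurableSet S)
    (hSi : ∀ x g, Function.update x i g ∈ S ↔ x ∈ S) :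
    resample i w μ S = μ S := by
  classical
  rw [← lintegral_indicator_one hS, ← lintegral_indicator_one hS]
  refine lintegral_resample_of_update_eq hw hw₁ (measurable_one.indicator hS) fun x g => ?_
  simp only [Set.indicator, Pi.one_apply]
  exact if_congr (hSi x g) rfl rfl

lemma isProbabilityMeasure_resample [IsProbabilityMeasure μ] :
    IsProbabilityMeasure (resample i w μ) :=
  ⟨(resample_apply_of_update_mem_iff hw hw₁ .univ fun _ _ => Iff.rfl).trans measure_univ⟩

end Resample

section PastMeasurable

variable {G : Type*} [MeasurableSpace G]

lemma PastMeasurable.mem_iff {n : ℤ} {E : Set (ℤ → G)} (hE : PastMeasurable n E) {x y : ℤ → G}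
    (hxy : ∀ m < n, x m = y m) : x ∈ E ↔ y ∈ E := by
  obtain ⟨T, -, rfl⟩ := hE
  simp only [Set.mem_preimage]
  rw [show (fun m : {m : ℤ // m < n} => x m) = fun m : {m : ℤ // m < n} => y m from
    funext fun m => hxy m m.2]

lemma PastMeasurable.measurableSet {n : ℤ} {E : Set (ℤ → G)} (hE : PastMeasurable n E) :
    MeasurableSet E :=
  (measurable_pi_lambda _ fun m => measurable_pi_apply m.1).comap_le E hE

variable [TopologicalSpace G]

lemma isPiSystem_isClopen_pastMeasurable (n : ℤ) :
    IsPiSystem {E : Set (ℤ → G) | IsClopen E ∧ PastMeasurable n E} :=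
  fun _ hE _ hF _ => ⟨hE.1.inter hF.1, hE.2.inter hF.2⟩

variable [DiscreteTopology G]

lemma comap_past_eq_generateFrom_isClopen (n : ℤ) :
    MeasurableSpace.comap (fun x : ℤ → G => fun m : {m : ℤ // m < n} => x m.1)
      MeasurableSpace.pi = .generateFrom {E | IsClopen E ∧ PastMeasurable n E} := by
  refine le_antisymm ?_ (MeasurableSpace.generateFrom_le fun E hE => hE.2)
  simp_rw [MeasurableSpace.pi, MeasurableSpace.comap_iSup, MeasurableSpace.comap_comp, iSup_le_iff]
  rintro m _ ⟨B, hB, rfl⟩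
  refine MeasurableSpace.measurableSet_generateFrom
    ⟨(isClopen_discrete B).preimage (continuous_apply m.1), ?_⟩
  exact ⟨_, measurable_pi_apply m hB, rfl⟩

lemma PastMeasurable.measure_eq_of_forall_isClopen {n : ℤ} {ν₁ ν₂ : Measure (ℤ → G)}
    [IsFiniteMeasure ν₁] (h : ∀ E, IsClopen E → PastMeasurable n E → ν₁ E = ν₂ E)
    {E : Set (ℤ → G)} (hE : PastMeasurable n E) : ν₁ E = ν₂ E :=
  ext_on_measurableSpace_of_generate_finite _ _ (fun F hF => h F hF.1 hF.2)
    (measurable_pi_lambda _ fun m => measurable_pi_apply m.1).comap_le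
    (comap_past_eq_generateFrom_isClopen n) (isPiSystem_isClopen_pastMeasurable n)
    (h _ isClopen_univ MeasurableSet.univ) hE

end PastMeasurable

section Sweep

variable {G : Type*} [Fintype G] [MeasurableSpace G]

noncomputable def sweep (w : ℤ → G → (ℤ → G) → ℝ≥0∞) (x₀ : ℤ → G) (a : ℤ) :
    ℕ → Measure (ℤ → G)
  | 0 => Measure.dirac x₀
  | t + 1 => resample (a + t) (w (a + t)) (sweep w x₀ a t)

variable {w : ℤ → G → (ℤ → G) → ℝ≥0∞} (hw : ∀ n g, Measurable (w n g))
  (hw₁ : ∀ n x, ∑ g, w n g x = 1)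
include hw hw₁

lemma isProbabilityMeasure_sweep (x₀ : ℤ → G) (a : ℤ) (t : ℕ) :
    IsProbabilityMeasure (sweep w x₀ a t) := by
  induction t with
  | zero => exact Measure.dirac.isProbabilityMeasure
  | succ t ih => exact isProbabilityMeasure_resample (hw _) (hw₁ _)

lemma sweep_inter_eq_setLIntegral [MeasurableSingletonClass G] (x₀ : ℤ → G) {a n : ℤ} {t : ℕ}
    (han : a ≤ n) (hnt : n < a + t)
    (hwn : ∀ g x y, (∀ m < n, x m = y m) → w n g x = w n g y)
    {E : Set (ℤ → G)} (hE : PastMeasurable n E) (g : G) :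
    sweep w x₀ a t (E ∩ {x | x n = g}) = ∫⁻ x in E, w n g x ∂sweep w x₀ a t := by
  induction t with
  | zero => omega
  | succ t ih =>
    have hEm : MeasurableSet E := hE.measurableSet
    have hupd (x : ℤ → G) (g' : G) : ∀ m < n, Function.update x (a + t) g' m = x m :=
      fun m hm => Function.update_of_ne (by omega) _ _
    have hEi x g' : Function.update x (a + t) g' ∈ E ↔ x ∈ E := hE.mem_iff (hupd x g')
    have hRHS : ∫⁻ x in E, w n g x ∂sweep w x₀ a (t + 1) = ∫⁻ x in E, w n g x ∂sweep w x₀ a t := by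
      rw [← lintegral_indicator hEm, ← lintegral_indicator hEm]
      refine lintegral_resample_of_update_eq (hw _) (hw₁ _) ((hw n g).indicator hEm) fun x g' => ?_
      by_cases hx : x ∈ E
      · rw [Set.indicator_of_mem hx, Set.indicator_of_mem ((hEi x g').2 hx),
          hwn g _ x (hupd x g')]
      · rw [Set.indicator_of_notMem hx, Set.indicator_of_notMem (mt (hEi x g').1 hx)]
    rw [hRHS]
    rcases (show n = a + t ∨ n < a + t by omega) with rfl | hlt
    · exact resample_inter_eq_setLIntegral (hw _) hEm hEi g
    · rw [← ih (by omega)]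
      refine resample_apply_of_update_mem_iff (hw _) (hw₁ _)
        (hEm.inter (measurable_pi_apply (X := fun _ => G) n (measurableSet_singleton g)))
        fun x g' => ?_
      simp only [Set.mem_inter_iff, Set.mem_ofPred_eq, hEi, Function.update_of_ne hlt.ne]

end Sweep

lemma MeasureTheory.ProbabilityMeasure.integral_eq_of_tendsto {ι X : Type*} [MeasurableSpace X]
    [TopologicalSpace X] [OpensMeasurableSpace X] {l : Filter ι} [l.NeBot]
    {μs : ι → ProbabilityMeasure X} {μ : ProbabilityMeasure X} (hμ : Tendsto μs l (𝓝 μ))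
    {f₁ f₂ : X →ᵇ ℝ}
    (h : ∀ᶠ i in l, ∫ x, f₁ x ∂(μs i : Measure X) = ∫ x, f₂ x ∂(μs i : Measure X)) :
    ∫ x, f₁ x ∂(μ : Measure X) = ∫ x, f₂ x ∂(μ : Measure X) :=
  tendsto_nhds_unique ((tendsto_iff_forall_integral_tendsto.1 hμ f₁).congr' h)
    (tendsto_iff_forall_integral_tendsto.1 hμ f₂)

section ContinuousPastKernel

variable {G : Type*} [Fintype G] [TopologicalSpace G]

/-- `q n g x` is the probability that site `n` carries `g`, given the configuration `x` before
`n`. -/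
structure IsContinuousPastKernel (q : ℤ → G → (ℤ → G) → ℝ) : Prop where
  nonneg : ∀ n g x, 0 ≤ q n g x
  sum_eq_one : ∀ n x, ∑ g, q n g x = 1
  eq_of_eqOn_past : ∀ n g x y, (∀ m < n, x m = y m) → q n g x = q n g y
  continuous : ∀ n g, Continuous (q n g)

namespace IsContinuousPastKernel

variable {q : ℤ → G → (ℤ → G) → ℝ} (hq : IsContinuousPastKernel q)
include hq

lemma le_one (n : ℤ) (g : G) (x : ℤ → G) : q n g x ≤ 1 :=
  hq.sum_eq_one n x ▸ Finset.single_le_sum (fun g _ => hq.nonneg n g x) (Finset.mem_univ g)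

lemma sum_ofReal_eq_one (n : ℤ) (x : ℤ → G) : ∑ g, ENNReal.ofReal (q n g x) = 1 := by
  rw [← ENNReal.ofReal_sum_of_nonneg fun g _ => hq.nonneg n g x, hq.sum_eq_one,
    ENNReal.ofReal_one]

variable [MeasurableSpace G] [DiscreteTopology G] [BorelSpace G]

lemma measurable (n : ℤ) (g : G) : Measurable (q n g) := (hq.continuous n g).measurable

lemma toReal_measure_inter_eq_iff {μ : Measure (ℤ → G)} [IsFiniteMeasure μ] {n : ℤ} {g : G}
    {E : Set (ℤ → G)} :
    (μ (E ∩ {x | x n = g})).toReal = ∫ x in E, q n g x ∂μ ↔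
      μ (E ∩ {x | x n = g}) = ∫⁻ x in E, ENNReal.ofReal (q n g x) ∂μ := by
  have hle : ∫⁻ x in E, ENNReal.ofReal (q n g x) ∂μ ≤ μ E :=
    (setLIntegral_mono measurable_const fun x _ =>
      ENNReal.ofReal_le_one.2 (hq.le_one n g x)).trans_eq (setLIntegral_one E)
  rw [integral_eq_lintegral_of_nonneg_ae (ae_of_all _ (hq.nonneg n g))
      (hq.measurable n g).aestronglyMeasurable,
    ENNReal.toReal_eq_toReal_iff' (measure_ne_top μ _)
      (ne_top_of_le_ne_top (measure_ne_top μ E) hle)]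

lemma toReal_measure_inter_eq_of_tendsto {ι : Type*} {l : Filter ι} [l.NeBot]
    {μs : ι → ProbabilityMeasure (ℤ → G)} {μ : ProbabilityMeasure (ℤ → G)}
    (hμ : Tendsto μs l (𝓝 μ)) {E : Set (ℤ → G)} (hE : IsClopen E) (n : ℤ) (g : G)
    (h : ∀ᶠ i in l, ((μs i : Measure (ℤ → G)) (E ∩ {x | x n = g})).toReal
      = ∫ x in E, q n g x ∂(μs i : Measure (ℤ → G))) :
    ((μ : Measure (ℤ → G)) (E ∩ {x | x n = g})).toReal
      = ∫ x in E, q n g x ∂(μ : Measure (ℤ → G)) := by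
  have hS : IsClopen (E ∩ {x | x n = g}) :=
    hE.inter ((isClopen_discrete {g}).preimage (continuous_apply n))
  let f₁ : (ℤ → G) →ᵇ ℝ := .mkOfCompact ⟨_, hS.continuous_indicator (continuous_const (y := 1))⟩
  let f₂ : (ℤ → G) →ᵇ ℝ := .mkOfCompact ⟨_, hE.continuous_indicator (hq.continuous n g)⟩
  have hf₁ : ∀ ν : Measure (ℤ → G), ∫ x, f₁ x ∂ν = (ν (E ∩ {x | x n = g})).toReal :=
    fun ν => integral_indicator_one hS.isOpen.measurableSet
  have hf₂ : ∀ ν : Measure (ℤ → G), ∫ x, f₂ x ∂ν = ∫ x in E, q n g x ∂ν :=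
    fun ν => integral_indicator hE.isOpen.measurableSet
  simp_rw [← hf₁, ← hf₂] at h ⊢
  exact ProbabilityMeasure.integral_eq_of_tendsto hμ h

theorem exists_compatible [Nonempty G] :
    ∃ μ : Measure (ℤ → G), IsProbabilityMeasure μ ∧ ∀ n g E, PastMeasurable n E →
      (μ (E ∩ {x | x n = g})).toReal = ∫ x in E, q n g x ∂μ := by
  let w n g x := ENNReal.ofReal (q n g x)
  have hw n g : Measurable (w n g) := (hq.measurable n g).ennreal_ofReal
  let μs (N : ℕ) : ProbabilityMeasure (ℤ → G) :=
    ⟨sweep w (fun _ => Classical.arbitrary G) (-N) (2 * N),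
      isProbabilityMeasure_sweep hw hq.sum_ofReal_eq_one _ _ _⟩
  let 𝒰 := Ultrafilter.of (atTop : Filter ℕ)
  set μ := (𝒰.map μs).lim
  have hμ : Tendsto μs 𝒰 (𝓝 μ) := (𝒰.map μs).le_nhds_lim
  have hsweep n g E (hE : PastMeasurable n E) : ∀ᶠ N in (𝒰 : Filter ℕ),
      ((μs N : Measure (ℤ → G)) (E ∩ {x | x n = g})).toReal
        = ∫ x in E, q n g x ∂(μs N : Measure (ℤ → G)) := by
    refine ((eventually_gt_atTop n.natAbs).mono fun N hN => ?_).filter_mono (Ultrafilter.of_le _)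
    refine hq.toReal_measure_inter_eq_iff.2
      (sweep_inter_eq_setLIntegral hw hq.sum_ofReal_eq_one _ ?_ ?_
        (fun g x y hxy => congrArg ENNReal.ofReal (hq.eq_of_eqOn_past n g x y hxy)) hE g) <;> omega
  refine ⟨μ, inferInstance, fun n g E hE => hq.toReal_measure_inter_eq_iff.2 ?_⟩
  rw [← Measure.restrict_apply hE.measurableSet, ← withDensity_apply _ hE.measurableSet]
  refine hE.measure_eq_of_forall_isClopen fun F hFc hF => ?_
  rw [Measure.restrict_apply hF.measurableSet, withDensity_apply _ hF.measurableSet,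
    ← hq.toReal_measure_inter_eq_iff]
  exact hq.toReal_measure_inter_eq_of_tendsto hμ hFc n g (hsweep n g F hF)

end IsContinuousPastKernel

end ContinuousPastKernel

section Imitation

variable {G : Type*} {A : Set ℕ} {θ : ℕ → ℝ} {P : ℕ → G → G → ℝ}

noncomputable def imitationKernel (θ : ℕ → ℝ) (P : ℕ → G → G → ℝ) (n : ℤ) (g : G) (x : ℤ → G) :
    ℝ :=
  ∑' k : ℕ, θ k * P k (x (n - k)) g

lemma imitation_term_nonneg (hθpos : ∀ k ∈ A, 0 < θ k) (hθ0 : ∀ k, k ∉ A → θ k = 0)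
    (hPnn : ∀ k ∈ A, ∀ i j : G, 0 ≤ P k i j) (k : ℕ) (i g : G) : 0 ≤ θ k * P k i g := by
  by_cases hk : k ∈ A
  · exact mul_nonneg (hθpos k hk).le (hPnn k hk i g)
  · simp [hθ0 k hk]

variable [Fintype G]

lemma imitation_term_le (hθpos : ∀ k ∈ A, 0 < θ k) (hθ0 : ∀ k, k ∉ A → θ k = 0)
    (hPnn : ∀ k ∈ A, ∀ i j : G, 0 ≤ P k i j) (hProw : ∀ k ∈ A, ∀ i : G, ∑ j, P k i j = 1)
    (k : ℕ) (i g : G) : θ k * P k i g ≤ θ k := by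
  by_cases hk : k ∈ A
  · refine mul_le_of_le_one_right (hθpos k hk).le ?_
    exact hProw k hk i ▸ Finset.single_le_sum (fun j _ => hPnn k hk i j) (Finset.mem_univ g)
  · simp [hθ0 k hk]

lemma sum_imitation_term (hθ0 : ∀ k, k ∉ A → θ k = 0)
    (hProw : ∀ k ∈ A, ∀ i : G, ∑ j, P k i j = 1) (k : ℕ) (i : G) :
    ∑ g, θ k * P k i g = θ k := by
  by_cases hk : k ∈ A
  · rw [← Finset.mul_sum, hProw k hk i, mul_one]
  · simp [hθ0 k hk]

lemma isContinuousPastKernel_imitationKernel [TopologicalSpace G] [DiscreteTopology G]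
    (hApos : ∀ k ∈ A, 0 < k) (hθpos : ∀ k ∈ A, 0 < θ k) (hθ0 : ∀ k, k ∉ A → θ k = 0)
    (hθsum : HasSum θ 1) (hPnn : ∀ k ∈ A, ∀ i j : G, 0 ≤ P k i j)
    (hProw : ∀ k ∈ A, ∀ i : G, ∑ j, P k i j = 1) :
    IsContinuousPastKernel (imitationKernel θ P) where
  nonneg n g x := tsum_nonneg fun k => imitation_term_nonneg hθpos hθ0 hPnn k _ g
  sum_eq_one n x := by
    have hs g : Summable fun k => θ k * P k (x (n - k)) g :=
      hθsum.summable.of_nonneg_of_le (fun k => imitation_term_nonneg hθpos hθ0 hPnn k _ g)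
        fun k => imitation_term_le hθpos hθ0 hPnn hProw k _ g
    simp only [imitationKernel]
    rw [← Summable.tsum_finsetSum fun g _ => hs g]
    simp_rw [sum_imitation_term hθ0 hProw, hθsum.tsum_eq]
  eq_of_eqOn_past n g x y hxy := by
    refine tsum_congr fun k => ?_
    by_cases hk : k ∈ A
    · rw [hxy _ (by linarith [hApos k hk])]
    · simp [hθ0 k hk]
  continuous n g := by
    refine continuous_tsum (fun k => continuous_const.mul
      ((continuous_of_discreteTopology (f := fun i => P k i g)).comp (continuous_apply _)))
      hθsum.summable fun k x => ?_
    rw [Real.norm_eq_abs, abs_of_nonneg (imitation_term_nonneg hθpos hθ0 hPnn k _ g)]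
    exact imitation_term_le hθpos hθ0 hPnn hProw k _ g

end Imitation

theorem stmt_12_general {G : Type*} [Fintype G] [Nonempty G]
    [MeasurableSpace G] [MeasurableSingletonClass G]
    (A : Set ℕ) (hApos : ∀ k ∈ A, 0 < k)
    (θ : ℕ → ℝ) (hθpos : ∀ k ∈ A, 0 < θ k) (hθ0 : ∀ k, k ∉ A → θ k = 0)
    (hθsum : HasSum θ 1)
    (P : ℕ → G → G → ℝ)
    (hPnn : ∀ k ∈ A, ∀ i j : G, 0 ≤ P k i j)
    (hProw : ∀ k ∈ A, ∀ i : G, ∑ j, P k i j = 1) :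
    ∃ μ : Measure (ℤ → G), IsProbabilityMeasure μ ∧ Compatible θ P μ := by
  let _ : TopologicalSpace G := ⊥
  have _ : DiscreteTopology G := ⟨rfl⟩
  exact (isContinuousPastKernel_imitationKernel hApos hθpos hθ0 hθsum hPnn hProw).exists_compatible

/-- for every imitation kernel on a nonempty finite alphabet,
`𝒢(p)` is nonempty. -/
theorem stmt_12 {G : Type*} [Fintype G] [DecidableEq G] [Nonempty G]
    [MeasurableSpace G] [MeasurableSingletonClass G]
    (A : Set ℕ) (hA : A.Nonempty) (hApos : ∀ k ∈ A, 0 < k)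
    (θ : ℕ → ℝ) (hθpos : ∀ k ∈ A, 0 < θ k) (hθ0 : ∀ k, k ∉ A → θ k = 0)
    (hθsum : HasSum θ 1)
    (P : ℕ → G → G → ℝ)
    (hPnn : ∀ k ∈ A, ∀ i j : G, 0 ≤ P k i j)
    (hProw : ∀ k ∈ A, ∀ i : G, ∑ j, P k i j = 1) :
    ∃ μ : Measure (ℤ → G), IsProbabilityMeasure μ ∧ Compatible θ P μ :=
  stmt_12_general A hApos θ hθpos hθ0 hθsum P hPnn hProw
end

section
/- If the set 𝒢(p) of probability measures compatible with the imitation kernel p consists of a single element μ, then μ is shift-invariant. -/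
/-
The shift carries compatible measures to compatible measures: the events measurable with
respect to the past before time `n` pull back to events measurable with respect to the past
before time `n + 1`, and the kernel only looks at the past at fixed distances. So the image of
the unique compatible measure under the shift is again compatible, hence equal to it.
-/

open MeasureTheory
open scoped BigOperators

section

variable {G : Type*} [MeasurableSpace G]

def leftShift : (ℤ → G) ≃ᵐ (ℤ → G) where
  toFun x n := x (n + 1)
  invFun x n := x (n - 1)
  left_inv x := funext fun n => by simp
  right_inv x := funext fun n => by simp
  measurable_toFun := measurable_pi_lambda _ fun _ => measurable_pi_apply _
  measurable_invFun := measurable_pi_lambda _ fun _ => measurable_pi_apply _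

theorem PastMeasurable.preimage_leftShift {n : ℤ} {E : Set (ℤ → G)}
    (hE : PastMeasurable n E) : PastMeasurable (n + 1) (leftShift ⁻¹' E) := by
  obtain ⟨s, hs, rfl⟩ := hE
  refine ⟨(fun y : {m : ℤ // m < n + 1} → G => fun m : {m : ℤ // m < n} =>
      y ⟨m.1 + 1, by omega⟩) ⁻¹' s, ?_, rfl⟩
  exact measurable_pi_lambda _ (fun _ => measurable_pi_apply _) hs

theorem Compatible.map_leftShift {θ : ℕ → ℝ} {P : ℕ → G → G → ℝ} {μ : Measure (ℤ → G)}
    (h : Compatible θ P μ) : Compatible θ P (μ.map leftShift) := by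
  intro n g E hE
  rw [MeasurableEquiv.map_apply, setIntegral_map_equiv]
  refine (h (n + 1) g _ hE.preimage_leftShift).trans
    (integral_congr_ae (.of_forall fun x => tsum_congr fun k => ?_))
  change θ k * P k (x (n + 1 - k)) g = θ k * P k (x (n - k + 1)) g
  rw [sub_add_eq_add_sub]

end

theorem stmt_13_general {G : Type*}
    [MeasurableSpace G]
    (θ : ℕ → ℝ)
    (P : ℕ → G → G → ℝ)
    (μ : Measure (ℤ → G)) (hμ : IsProbabilityMeasure μ) (hcomp : Compatible θ P μ)
    (huniq : ∀ ν : Measure (ℤ → G), IsProbabilityMeasure ν → Compatible θ P ν → ν = μ) :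
    Measure.map (fun x : ℤ → G => fun n : ℤ => x (n + 1)) μ = μ :=
  huniq (μ.map leftShift) (Measure.isProbabilityMeasure_map leftShift.measurable.aemeasurable)
    hcomp.map_leftShift

/-- if `𝒢(p)` consists of a single element `μ`, then `μ` is
shift-invariant. -/
theorem stmt_13 {G : Type*} [Fintype G] [DecidableEq G] [Nonempty G]
    [MeasurableSpace G] [MeasurableSingletonClass G]
    (A : Set ℕ) (hA : A.Nonempty) (hApos : ∀ k ∈ A, 0 < k)
    (θ : ℕ → ℝ) (hθpos : ∀ k ∈ A, 0 < θ k) (hθ0 : ∀ k, k ∉ A → θ k = 0)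
    (hθsum : HasSum θ 1)
    (P : ℕ → G → G → ℝ)
    (hPnn : ∀ k ∈ A, ∀ i j : G, 0 ≤ P k i j)
    (hProw : ∀ k ∈ A, ∀ i : G, ∑ j, P k i j = 1)
    (μ : Measure (ℤ → G)) (hμ : IsProbabilityMeasure μ) (hcomp : Compatible θ P μ)
    (huniq : ∀ ν : Measure (ℤ → G), IsProbabilityMeasure ν → Compatible θ P ν → ν = μ) :
    Measure.map (fun x : ℤ → G => fun n : ℤ => x (n + 1)) μ = μ :=
  stmt_13_general θ P μ hμ hcomp huniq
end
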